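/- Let F = F_{2^n} and let E be as above (ordinary, a1 ≠ 0), with P = (x,y) ∈ E(F) not 2-torsion, b = a1(a1x + a3). Then Tr_{F/F_2}((b6·x + b8)/b²) = Tr_{F/F_2}((x + a2)/a1²), where b6 = a3² and b8 = a1²a6 + a1a3a4 + a2a3² + a4². Equivalently, using that Tr((x³ + a2x² + a4x + a6)/(a1x + a3)²) = 0 (since P lies on the curve), one has the algebraic identity (b6x + b8)/b² = (x + a2)/a1² + (x³ + a2x² + a4x + a6)/(a1x + a3)² + a4/b + (a4/b)² in F. -/

import Mathlib

/-!
Since `P` lies on the curve, `u = y/(a₁x + a₃)` satisfies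
`u² + u = (x³ + a₂x² + a₄x + a₆)/(a₁x + a₃)²`, and the displayed identity (a polynomial identity
after clearing the denominator `b²`, valid in characteristic `2`) writes `(b₆x + b₈)/b²` as
`(x + a₂)/a₁² + (u² + u) + (v + v²)` with `v = a₄/b`. Since the Frobenius is an automorphism over
`𝔽₂`, `Tr(w²) = Tr(w)`, so `Tr(u² + u) = Tr(v + v²) = 0`.
-/

theorem Algebra.trace_pow_card {K L : Type*} [Field K] [Fintype K] [Field L] [Algebra K L]
    [Algebra.IsAlgebraic K L] (w : L) :
    Algebra.trace K L (w ^ Fintype.card K) = Algebra.trace K L w :=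
  Algebra.trace_eq_of_algEquiv (FiniteField.frobeniusAlgEquivOfAlgebraic K L) w

theorem Algebra.trace_sq_add_self_eq_zero {L : Type*} [Field L] [Algebra (ZMod 2) L]
    [Algebra.IsAlgebraic (ZMod 2) L] (w : L) :
    Algebra.trace (ZMod 2) L (w ^ 2 + w) = 0 := by
  have hsq := Algebra.trace_pow_card (K := ZMod 2) w
  rw [ZMod.card] at hsq
  rw [map_add, hsq, CharTwo.add_self_eq_zero]

theorem div_sq_eq_sq_add_of_sq_add_mul {K : Type*} [Field K] {c y r : K} (hc : c ≠ 0)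
    (h : y ^ 2 + c * y = r) : r / c ^ 2 = (y / c) ^ 2 + y / c := by
  rw [← h]
  field_simp

theorem char_two_weierstrass_identity {K : Type*} [Field K] [CharP K 2]
    {a1 a2 a3 a4 a6 x : K} (ha1 : a1 ≠ 0) (hc : a1 * x + a3 ≠ 0) :
    (a3 ^ 2 * x + (a1 ^ 2 * a6 + a1 * a3 * a4 + a2 * a3 ^ 2 + a4 ^ 2)) / (a1 * (a1 * x + a3)) ^ 2 =
      (x + a2) / a1 ^ 2 + (x ^ 3 + a2 * x ^ 2 + a4 * x + a6) / (a1 * x + a3) ^ 2 +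
        a4 / (a1 * (a1 * x + a3)) + (a4 / (a1 * (a1 * x + a3))) ^ 2 := by
  have hnum : a3 ^ 2 * x + (a1 ^ 2 * a6 + a1 * a3 * a4 + a2 * a3 ^ 2 + a4 ^ 2) =
      (x + a2) * (a1 * x + a3) ^ 2 + a1 ^ 2 * (x ^ 3 + a2 * x ^ 2 + a4 * x + a6) +
        a4 * (a1 * (a1 * x + a3)) + a4 ^ 2 := by
    linear_combination (-(a1 ^ 2 * x ^ 3) - a2 * a1 ^ 2 * x ^ 2 - a1 ^ 2 * a4 * x
      - a1 * a3 * x ^ 2 - a1 * a2 * a3 * x) * CharTwo.two_eq_zero (R := K)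
  generalize a1 * x + a3 = c at hc hnum ⊢
  rw [hnum]
  field_simp

theorem stmt_16_general (n : ℕ) (a1 a2 a3 a4 a6 x y : GaloisField 2 n)
    (hcurve : y ^ 2 + a1 * x * y + a3 * y = x ^ 3 + a2 * x ^ 2 + a4 * x + a6)
    (ha1 : a1 ≠ 0) (h2tor : a1 * x + a3 ≠ 0) :
    let F := GaloisField 2 n
    let b : F := a1 * (a1 * x + a3)
    let b6 : F := a3 ^ 2
    let b8 : F := a1 ^ 2 * a6 + a1 * a3 * a4 + a2 * a3 ^ 2 + a4 ^ 2
    Algebra.trace (ZMod 2) F ((b6 * x + b8) / b ^ 2) =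
        Algebra.trace (ZMod 2) F ((x + a2) / a1 ^ 2) ∧
      (b6 * x + b8) / b ^ 2 =
        (x + a2) / a1 ^ 2 + (x ^ 3 + a2 * x ^ 2 + a4 * x + a6) / (a1 * x + a3) ^ 2 +
          a4 / b + (a4 / b) ^ 2 := by
  intro F b b6 b8
  have hidentity := char_two_weierstrass_identity (a2 := a2) (a4 := a4) (a6 := a6) ha1 h2tor
  refine ⟨?_, hidentity⟩
  have hcurve_div : (x ^ 3 + a2 * x ^ 2 + a4 * x + a6) / (a1 * x + a3) ^ 2 =
      (y / (a1 * x + a3)) ^ 2 + y / (a1 * x + a3) :=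
    div_sq_eq_sq_add_of_sq_add_mul h2tor (by rw [← hcurve]; ring)
  rw [hidentity, hcurve_div, add_assoc _ _ ((a4 / _) ^ 2), add_comm (a4 / _), map_add, map_add,
    Algebra.trace_sq_add_self_eq_zero, Algebra.trace_sq_add_self_eq_zero, add_zero, add_zero]

/-- For an ordinary curve over `F = F_{2ⁿ}` with `P = (x,y) ∈ E(F)` not `2`-torsion and
`b = a₁(a₁x + a₃)`: `Tr_{F/F₂}((b₆x + b₈)/b²) = Tr_{F/F₂}((x + a₂)/a₁²)`, and one has the
algebraic identity
`(b₆x + b₈)/b² = (x + a₂)/a₁² + (x³ + a₂x² + a₄x + a₆)/(a₁x + a₃)² + a₄/b + (a₄/b)²`. -/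
theorem stmt_16 (n : ℕ) (hn : n ≠ 0) (a1 a2 a3 a4 a6 x y : GaloisField 2 n)
    (hcurve : y ^ 2 + a1 * x * y + a3 * y = x ^ 3 + a2 * x ^ 2 + a4 * x + a6)
    (ha1 : a1 ≠ 0) (h2tor : a1 * x + a3 ≠ 0) :
    let F := GaloisField 2 n
    let b : F := a1 * (a1 * x + a3)
    let b6 : F := a3 ^ 2
    let b8 : F := a1 ^ 2 * a6 + a1 * a3 * a4 + a2 * a3 ^ 2 + a4 ^ 2
    Algebra.trace (ZMod 2) F ((b6 * x + b8) / b ^ 2) =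
        Algebra.trace (ZMod 2) F ((x + a2) / a1 ^ 2) ∧
      (b6 * x + b8) / b ^ 2 =
        (x + a2) / a1 ^ 2 + (x ^ 3 + a2 * x ^ 2 + a4 * x + a6) / (a1 * x + a3) ^ 2 +
          a4 / b + (a4 / b) ^ 2 :=
  stmt_16_general n a1 a2 a3 a4 a6 x y hcurve ha1 h2tor
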